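/- Let α ∈ (0,1) and λ ∈ ℝ with λ ≠ 0. There is no continuous function F : ℝ → ℝ with F(0) = 1 satisfying F(t+s) = F(t)·F(s) for all t, s ∈ ℝ and F(t) = E_α(λ·t^α) for all t ≥ 0. -/

import Mathlib

/-!
Near `t = 0⁺` the candidate satisfies `F t - 1 ~ L t^α` with `L = λ / Γ(α + 1) ≠ 0`, because
`E_α` has derivative `1 / Γ(α + 1)` at `0`. The group law gives `F (2t) - 1 = (F t - 1)(F t + 1)`,
so `(F (2t) - 1) / t^α` tends both to `2 L` and, by rescaling, to `2^α L`. Hence `2^α = 2`, which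
is impossible for `α < 1`.
-/

noncomputable def mittagLeffler (α z : ℝ) : ℝ := ∑' n : ℕ, z ^ n / Real.Gamma (α * n + 1)

noncomputable def mittagLeffler2 (α β z : ℝ) : ℝ := ∑' n : ℕ, z ^ n / Real.Gamma (α * n + β)

open Real Set Filter Topology MeasureTheory

theorem Real.rpow_mul_exp_neg_le_Gamma_add_one {x y : ℝ} (hx : 0 ≤ x) (hy : 0 ≤ y) :
    y ^ x * exp (-y) ≤ Gamma (x + 1) := by
  have hint : IntegrableOn (fun t => exp (-t) * t ^ x) (Ioi 0) := by
    simpa using GammaIntegral_convergent (s := x + 1) (by linarith)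
  calc y ^ x * exp (-y) = ∫ t in Ioi y, exp (-t) * y ^ x := by
        rw [integral_mul_const, integral_exp_neg_Ioi, mul_comm]
    _ ≤ ∫ t in Ioi y, exp (-t) * t ^ x :=
        setIntegral_mono_on ((integrableOn_exp_neg_Ioi y).mul_const _)
          (hint.mono_set (Ioi_subset_Ioi hy)) measurableSet_Ioi fun t ht =>
          mul_le_mul_of_nonneg_left (rpow_le_rpow hy (le_of_lt ht) hx) (exp_pos _).le
    _ ≤ ∫ t in Ioi 0, exp (-t) * t ^ x :=
        setIntegral_mono_set hint
          (ae_restrict_of_forall_mem measurableSet_Ioi fun t ht =>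
            mul_nonneg (exp_pos _).le (rpow_nonneg (le_of_lt ht) _))
          (Ioi_subset_Ioi hy).eventuallyLE
    _ = Gamma (x + 1) := by rw [Gamma_eq_integral (by linarith), add_sub_cancel_right]

theorem summable_pow_div_Gamma_mul_add_one {α : ℝ} (hα : 0 < α) (z : ℝ) :
    Summable fun n : ℕ => z ^ n / Gamma (α * n + 1) := by
  -- `y ^ α = |z| + 1`, so the Gamma bound turns the series into a geometric one
  set y := (|z| + 1) ^ α⁻¹
  have hy : 0 ≤ y := by positivity
  have hΓ (n : ℕ) : (|z| + 1) ^ n * exp (-y) ≤ Gamma (α * n + 1) := by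
    calc (|z| + 1) ^ n * exp (-y) = y ^ (α * n) * exp (-y) := by
          rw [← rpow_mul (by positivity), inv_mul_cancel_left₀ hα.ne', rpow_natCast]
      _ ≤ Gamma (α * n + 1) := rpow_mul_exp_neg_le_Gamma_add_one (by positivity) hy
  have hq : |z| / (|z| + 1) < 1 := (div_lt_one (by positivity)).2 (lt_add_one _)
  refine Summable.of_norm_bounded
    ((summable_geometric_of_lt_one (by positivity) hq).mul_left (exp y)) fun n => ?_
  rw [norm_div, norm_pow, Real.norm_eq_abs, Real.norm_eq_abs, div_pow,
    abs_of_pos (Gamma_pos_of_pos (by positivity)), div_le_iff₀ (Gamma_pos_of_pos (by positivity))]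
  calc |z| ^ n = exp y * (|z| ^ n / (|z| + 1) ^ n) * ((|z| + 1) ^ n * exp (-y)) := by
        rw [exp_neg]; field_simp
    _ ≤ _ := mul_le_mul_of_nonneg_left (hΓ n) (by positivity)

noncomputable def mittagLefflerSeries (α : ℝ) : FormalMultilinearSeries ℝ ℝ ℝ :=
  .ofScalars ℝ fun n => (Gamma (α * n + 1))⁻¹

theorem mittagLefflerSeries_radius {α : ℝ} (hα : 0 < α) :
    (mittagLefflerSeries α).radius = ⊤ := by
  refine FormalMultilinearSeries.radius_eq_top_of_summable_norm _ fun r => ?_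
  refine (summable_pow_div_Gamma_mul_add_one hα r).congr fun n => ?_
  rw [mittagLefflerSeries, FormalMultilinearSeries.ofScalars_norm, norm_inv, Real.norm_eq_abs,
    abs_of_pos (Gamma_pos_of_pos (by positivity)), div_eq_inv_mul]

theorem mittagLefflerSeries_sum (α : ℝ) : (mittagLefflerSeries α).sum = mittagLeffler α := by
  ext z
  refine (FormalMultilinearSeries.ofScalars_sum_eq _ z).trans (tsum_congr fun n => ?_)
  rw [smul_eq_mul, inv_mul_eq_div]

theorem hasDerivAt_mittagLeffler_zero {α : ℝ} (hα : 0 < α) :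
    HasDerivAt (mittagLeffler α) (Gamma (α + 1))⁻¹ 0 := by
  have h := ((mittagLefflerSeries α).hasFPowerSeriesOnBall
    (by simp [mittagLefflerSeries_radius hα])).hasFPowerSeriesAt.hasDerivAt
  rw [mittagLefflerSeries_sum] at h
  simpa [mittagLefflerSeries, FormalMultilinearSeries.ofScalars_apply_eq] using h

theorem mittagLeffler_zero (α : ℝ) : mittagLeffler α 0 = 1 := by
  rw [mittagLeffler, tsum_eq_single 0 fun n hn => by simp [hn]]
  simp

theorem tendsto_rpow_nhdsGT_zero {α : ℝ} (hα : 0 < α) :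
    Tendsto (fun t : ℝ => t ^ α) (𝓝[>] 0) (𝓝[>] 0) := by
  refine tendsto_nhdsWithin_iff.2
    ⟨?_, eventually_nhdsWithin_of_forall fun t ht => rpow_pos_of_pos ht α⟩
  simpa [zero_rpow hα.ne'] using
    (continuousAt_rpow_const 0 α (Or.inr hα.le)).tendsto.mono_left nhdsWithin_le_nhds

theorem HasDerivAt.tendsto_sub_div_rpow {f : ℝ → ℝ} {f' α c : ℝ} (hf : HasDerivAt f f' 0)
    (hα : 0 < α) (hc : c ≠ 0) :
    Tendsto (fun t => (f (c * t ^ α) - f 0) / t ^ α) (𝓝[>] 0) (𝓝 (c * f')) := by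
  have htα := tendsto_rpow_nhdsGT_zero hα
  have hz : Tendsto (fun t : ℝ => c * t ^ α) (𝓝[>] 0) (𝓝[≠] 0) := by
    refine tendsto_nhdsWithin_iff.2 ⟨?_, htα.eventually_mem self_mem_nhdsWithin |>.mono
      fun t ht => mul_ne_zero hc (ne_of_gt ht)⟩
    simpa using (htα.mono_right nhdsWithin_le_nhds).const_mul c
  refine ((hasDerivAt_iff_tendsto_slope.1 hf).comp hz).const_mul c |>.congr'
    (eventually_nhdsWithin_of_forall fun t (ht : 0 < t) => ?_)
  have : t ^ α ≠ 0 := (rpow_pos_of_pos ht α).ne'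
  simp only [Function.comp, slope_def_field, sub_zero]
  field_simp

theorem eq_one_of_tendsto_sub_one_div_rpow {F : ℝ → ℝ} {α L : ℝ} (hα : 0 < α) (hL : L ≠ 0)
    (hsq : ∀ t, F (2 * t) = F t ^ 2)
    (hF : Tendsto (fun t => (F t - 1) / t ^ α) (𝓝[>] 0) (𝓝 L)) : α = 1 := by
  have hF1 : Tendsto F (𝓝[>] 0) (𝓝 1) := by
    have h := (((tendsto_rpow_nhdsGT_zero hα).mono_right nhdsWithin_le_nhds).mul hF).add_const 1
    rw [zero_mul, zero_add] at h
    refine h.congr' (eventually_nhdsWithin_of_forall fun t (ht : 0 < t) => ?_)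
    have : t ^ α ≠ 0 := (rpow_pos_of_pos ht α).ne'
    field_simp
    ring
  have hdouble : Tendsto (fun t : ℝ => 2 * t) (𝓝[>] 0) (𝓝[>] 0) := by
    refine tendsto_nhdsWithin_iff.2 ⟨?_, eventually_nhdsWithin_of_forall fun t (ht : 0 < t) =>
      mul_pos two_pos ht⟩
    simpa using ((continuous_const_mul (2 : ℝ)).tendsto 0).mono_left nhdsWithin_le_nhds
  have hlim₁ : Tendsto (fun t => (F (2 * t) - 1) / t ^ α) (𝓝[>] 0) (𝓝 (2 ^ α * L)) := by
    refine ((hF.comp hdouble).const_mul (2 ^ α)).congr'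
      (eventually_nhdsWithin_of_forall fun t (ht : 0 < t) => ?_)
    have : t ^ α ≠ 0 := (rpow_pos_of_pos ht α).ne'
    have : (2 : ℝ) ^ α ≠ 0 := (rpow_pos_of_pos two_pos α).ne'
    simp only [Function.comp, mul_rpow zero_le_two ht.le]
    field_simp
  have hlim₂ : Tendsto (fun t => (F (2 * t) - 1) / t ^ α) (𝓝[>] 0) (𝓝 (L * 2)) := by
    refine (hF.mul ((hF1.add_const 1).trans_eq (by norm_num))).congr'
      (Eventually.of_forall fun t => ?_)
    change _ = (F (2 * t) - 1) / t ^ α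
    rw [hsq]
    ring
  have h2 : (2 : ℝ) ^ α = 2 ^ (1 : ℝ) := by
    rw [rpow_one]
    exact mul_right_cancel₀ hL ((tendsto_nhds_unique hlim₁ hlim₂).trans (mul_comm _ _))
  exact (rpow_right_inj two_pos (by norm_num)).1 h2

theorem ml_no_group_extension (α : ℝ) (hα : 0 < α) (hα1 : α < 1) (lam : ℝ) (hlam : lam ≠ 0) :
    ¬ ∃ F : ℝ → ℝ, Continuous F ∧ F 0 = 1 ∧
      (∀ t s : ℝ, F (t + s) = F t * F s) ∧
      (∀ t : ℝ, 0 ≤ t → F t = mittagLeffler α (lam * t ^ α)) := by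
  rintro ⟨F, -, -, hmul, hF⟩
  have hlim : Tendsto (fun t => (F t - 1) / t ^ α) (𝓝[>] 0)
      (𝓝 (lam * (Gamma (α + 1))⁻¹)) := by
    refine ((hasDerivAt_mittagLeffler_zero hα).tendsto_sub_div_rpow hα hlam).congr'
      (eventually_nhdsWithin_of_forall fun t (ht : 0 < t) => ?_)
    rw [mittagLeffler_zero, ← hF t ht.le]
  have hL : lam * (Gamma (α + 1))⁻¹ ≠ 0 :=
    mul_ne_zero hlam (inv_ne_zero (Gamma_pos_of_pos (by linarith)).ne')
  have hsq (t : ℝ) : F (2 * t) = F t ^ 2 := by rw [two_mul, hmul, sq]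
  exact hα1.ne (eq_one_of_tendsto_sub_one_div_rpow hα hL hsq hlim)
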